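/- arXiv:2306.11110 — 2 statements merged into one kernel-verified Lean document; each statement's English description precedes it below -/
import Mathlib

section
/- For every ρ > 0 and every z ∈ ℝ, the generating function U(ρ,z) = A·log(ρ²) + Σ_{i=1}^r a_i·(2·d_i − (z − z_i)·log((d_i + z − z_i)/(d_i − z + z_i))) has second partial derivatives ∂²U/∂ρ² = −(2/ρ²)·(A + Σ a_i·d_i) + 2·Σ a_i/d_i, ∂²U/∂ρ∂z = (2/ρ)·Σ a_i·(z − z_i)/d_i, and ∂²U/∂z² = −2·Σ a_i/d_i; consequently U is an axisymmetric harmonic function: ∂²U/∂z² + ∂²U/∂ρ² + (1/ρ)·∂U/∂ρ = 0 on the half-plane ρ > 0. -/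
open Finset

/-- The distance `d_i(ρ,z) = (ρ² + (z − z_i)²)^{1/2}`. -/
noncomputable def dd {r : ℕ} (zs : Fin r → ℝ) (ρ z : ℝ) (i : Fin r) : ℝ :=
  Real.sqrt (ρ ^ 2 + (z - zs i) ^ 2)

/-- The generating function `U(ρ,z)`. -/
noncomputable def genU {r : ℕ} (A : ℝ) (a zs : Fin r → ℝ) (ρ z : ℝ) : ℝ :=
  A * Real.log (ρ ^ 2) +
    ∑ i, a i * (2 * dd zs ρ z i -
      (z - zs i) * Real.log ((dd zs ρ z i + z - zs i) / (dd zs ρ z i - z + zs i)))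

open Real

/-!
Each summand of `U` depends only on `ρ` and `w = z − zᵢ`. Writing `d = √(ρ² + w²)` and
`L = log ((d + w)/(d − w))`, one has `∂_ρ L = −2w/(ρd)` and `∂_w L = 2/d` (using `d² = ρ² + w²`),
so the summand `2d − wL` has `∂_ρ = 2d/ρ` and `∂_w = −L`. Hence `U_ρ = (2/ρ)(A + Σ aᵢdᵢ)` and
`U_z = −Σ aᵢLᵢ`; differentiating once more gives the second derivatives, and in
`U_zz + U_ρρ + U_ρ/ρ` the terms `±2 Σ aᵢ/dᵢ` and `±(2/ρ²)(A + Σ aᵢdᵢ)` cancel in pairs.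
-/

section Source

variable {ρ w : ℝ}

lemma abs_lt_sqrt_sq_add_sq (hρ : ρ ≠ 0) : |w| < √(ρ ^ 2 + w ^ 2) :=
  (lt_sqrt (abs_nonneg w)).2 (by rw [sq_abs]; exact lt_add_of_pos_left _ (by positivity))

lemma sqrt_sq_add_sq_add_pos (hρ : ρ ≠ 0) : 0 < √(ρ ^ 2 + w ^ 2) + w := by
  linarith [neg_abs_le w, abs_lt_sqrt_sq_add_sq (w := w) hρ]

lemma sqrt_sq_add_sq_sub_pos (hρ : ρ ≠ 0) : 0 < √(ρ ^ 2 + w ^ 2) - w := by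
  linarith [le_abs_self w, abs_lt_sqrt_sq_add_sq (w := w) hρ]

lemma hasDerivAt_sqrt_sq_add_sq_fst (h : ρ ^ 2 + w ^ 2 ≠ 0) :
    HasDerivAt (fun s => √(s ^ 2 + w ^ 2)) (ρ / √(ρ ^ 2 + w ^ 2)) ρ := by
  convert ((hasDerivAt_pow 2 ρ).add_const (w ^ 2)).sqrt h using 1
  field_simp
  norm_num [mul_comm]

lemma hasDerivAt_sqrt_sq_add_sq_snd (h : ρ ^ 2 + w ^ 2 ≠ 0) :
    HasDerivAt (fun t => √(ρ ^ 2 + t ^ 2)) (w / √(ρ ^ 2 + w ^ 2)) w := by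
  simp only [add_comm (ρ ^ 2)] at h ⊢
  exact hasDerivAt_sqrt_sq_add_sq_fst h

noncomputable def logRatio (ρ w : ℝ) : ℝ :=
  log (√(ρ ^ 2 + w ^ 2) + w) - log (√(ρ ^ 2 + w ^ 2) - w)

noncomputable def sourceTerm (ρ w : ℝ) : ℝ :=
  2 * √(ρ ^ 2 + w ^ 2) - w * logRatio ρ w

lemma hasDerivAt_logRatio_fst (hρ : ρ ≠ 0) :
    HasDerivAt (fun s => logRatio s w) (-(2 * w) / (ρ * √(ρ ^ 2 + w ^ 2))) ρ := by
  have hd := hasDerivAt_sqrt_sq_add_sq_fst (w := w) (by positivity)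
  have hp := sqrt_sq_add_sq_add_pos (w := w) hρ
  have hm := sqrt_sq_add_sq_sub_pos (w := w) hρ
  have hsq : √(ρ ^ 2 + w ^ 2) ^ 2 = ρ ^ 2 + w ^ 2 := sq_sqrt (by positivity)
  refine ((hd.add_const w).log hp.ne').sub ((hd.sub_const w).log hm.ne') |>.congr_deriv ?_
  field_simp
  linear_combination (2 * w) * hsq

lemma hasDerivAt_logRatio_snd (hρ : ρ ≠ 0) :
    HasDerivAt (logRatio ρ) (2 / √(ρ ^ 2 + w ^ 2)) w := by
  have hd := hasDerivAt_sqrt_sq_add_sq_snd (ρ := ρ) (w := w) (by positivity)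
  have hp := sqrt_sq_add_sq_add_pos (w := w) hρ
  have hm := sqrt_sq_add_sq_sub_pos (w := w) hρ
  refine ((hd.add (hasDerivAt_id w)).log hp.ne').sub
    ((hd.sub (hasDerivAt_id w)).log hm.ne') |>.congr_deriv ?_
  simp only [Pi.add_apply, Pi.sub_apply, id]
  field_simp
  ring

lemma hasDerivAt_sourceTerm_fst (hρ : ρ ≠ 0) :
    HasDerivAt (fun s => sourceTerm s w) (2 * √(ρ ^ 2 + w ^ 2) / ρ) ρ := by
  have hsq : √(ρ ^ 2 + w ^ 2) ^ 2 = ρ ^ 2 + w ^ 2 := sq_sqrt (by positivity)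
  refine ((hasDerivAt_sqrt_sq_add_sq_fst (by positivity)).const_mul 2).sub
    ((hasDerivAt_logRatio_fst hρ).const_mul w) |>.congr_deriv ?_
  field_simp
  linear_combination -hsq

lemma hasDerivAt_sourceTerm_snd (hρ : ρ ≠ 0) :
    HasDerivAt (sourceTerm ρ) (-logRatio ρ w) w := by
  refine ((hasDerivAt_sqrt_sq_add_sq_snd (by positivity)).const_mul 2).sub
    ((hasDerivAt_id w).mul (hasDerivAt_logRatio_snd hρ)) |>.congr_deriv ?_
  simp only [id]
  field_simp
  ring

end Source

section GenU

variable {r : ℕ} (A : ℝ) (a zs : Fin r → ℝ) {ρ : ℝ} (z : ℝ)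

lemma genU_eq_sum_sourceTerm (hρ : ρ ≠ 0) :
    genU A a zs ρ z = A * log (ρ ^ 2) + ∑ i, a i * sourceTerm ρ (z - zs i) := by
  unfold genU
  congr 1
  refine sum_congr rfl fun i _ => ?_
  rw [sourceTerm, logRatio, ← log_div (sqrt_sq_add_sq_add_pos hρ).ne'
    (sqrt_sq_add_sq_sub_pos hρ).ne', dd, add_sub_assoc, sub_add]

lemma hasDerivAt_dd_fst (i : Fin r) (hρ : ρ ≠ 0) :
    HasDerivAt (fun s => dd zs s z i) (ρ / dd zs ρ z i) ρ :=
  hasDerivAt_sqrt_sq_add_sq_fst (by positivity)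

lemma hasDerivAt_dd_snd (i : Fin r) (hρ : ρ ≠ 0) :
    HasDerivAt (fun t => dd zs ρ t i) ((z - zs i) / dd zs ρ z i) z :=
  (hasDerivAt_sqrt_sq_add_sq_snd (by positivity)).comp_sub_const z (zs i)

lemma hasDerivAt_genU_fst (hρ : ρ ≠ 0) :
    HasDerivAt (fun s => genU A a zs s z) (2 / ρ * (A + ∑ i, a i * dd zs ρ z i)) ρ := by
  have hU : (fun s => genU A a zs s z) =ᶠ[nhds ρ]
      fun s => A * log (s ^ 2) + ∑ i, a i * sourceTerm s (z - zs i) := by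
    filter_upwards [eventually_ne_nhds hρ] with s hs
    exact genU_eq_sum_sourceTerm A a zs z hs
  refine (((hasDerivAt_pow 2 ρ).log (pow_ne_zero 2 hρ)).const_mul A |>.add
    (HasDerivAt.fun_sum fun i _ => (hasDerivAt_sourceTerm_fst hρ).const_mul (a i)))
    |>.congr_of_eventuallyEq hU |>.congr_deriv ?_
  simp only [mul_add, mul_sum, dd]
  congr 1
  · norm_num
    field_simp
  · exact sum_congr rfl fun i _ => by ring

lemma hasDerivAt_genU_snd (hρ : ρ ≠ 0) :
    HasDerivAt (fun t => genU A a zs ρ t) (-∑ i, a i * logRatio ρ (z - zs i)) z := by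
  simp only [genU_eq_sum_sourceTerm A a zs _ hρ]
  refine (HasDerivAt.fun_sum fun i _ =>
    ((hasDerivAt_sourceTerm_snd hρ).comp_sub_const z (zs i)).const_mul (a i)).const_add _
    |>.congr_deriv ?_
  simp only [mul_neg, sum_neg_distrib]

lemma hasDerivAt_deriv_genU_fst (hρ : ρ ≠ 0) :
    HasDerivAt (fun t => deriv (fun s => genU A a zs s z) t)
      (-(2 / ρ ^ 2) * (A + ∑ i, a i * dd zs ρ z i) + 2 * ∑ i, a i / dd zs ρ z i) ρ := by
  have hUρ : (fun t => deriv (fun s => genU A a zs s z) t) =ᶠ[nhds ρ]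
      fun t => 2 / t * (A + ∑ i, a i * dd zs t z i) := by
    filter_upwards [eventually_ne_nhds hρ] with t ht
    exact (hasDerivAt_genU_fst A a zs z ht).deriv
  have h2t : HasDerivAt (fun t : ℝ => 2 / t) (-(2 / ρ ^ 2)) ρ := by
    simpa [div_eq_mul_inv] using (hasDerivAt_inv hρ).const_mul 2
  refine h2t.mul ((HasDerivAt.fun_sum fun i _ =>
    (hasDerivAt_dd_fst zs z i hρ).const_mul (a i)).const_add A)
    |>.congr_of_eventuallyEq hUρ |>.congr_deriv ?_
  simp only [mul_sum, mul_div_assoc']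
  congr 1
  exact sum_congr rfl fun i _ => by field_simp

lemma hasDerivAt_deriv_genU_fst_snd (hρ : ρ ≠ 0) :
    HasDerivAt (fun t => deriv (fun s => genU A a zs s t) ρ)
      (2 / ρ * ∑ i, a i * (z - zs i) / dd zs ρ z i) z := by
  simp only [fun t => (hasDerivAt_genU_fst A a zs t hρ).deriv]
  refine ((HasDerivAt.fun_sum fun i _ =>
    (hasDerivAt_dd_snd zs z i hρ).const_mul (a i)).const_add A).const_mul (2 / ρ)
    |>.congr_deriv ?_
  simp only [mul_div_assoc']

lemma hasDerivAt_deriv_genU_snd (hρ : ρ ≠ 0) :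
    HasDerivAt (fun t => deriv (fun s => genU A a zs ρ s) t)
      (-2 * ∑ i, a i / dd zs ρ z i) z := by
  simp only [fun t => (hasDerivAt_genU_snd A a zs t hρ).deriv]
  refine (HasDerivAt.fun_sum fun i _ =>
    ((hasDerivAt_logRatio_snd hρ).comp_sub_const z (zs i)).const_mul (a i)).neg
    |>.congr_deriv ?_
  simp only [mul_sum, dd, ← sum_neg_distrib]
  exact sum_congr rfl fun i _ => by ring

end GenU

theorem statement1_general {r : ℕ} (A : ℝ)
    (zs a : Fin r → ℝ)
    (ρ z : ℝ) (hρ : 0 < ρ) :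
    -- second partial derivative in ρ
    HasDerivAt (fun t => deriv (fun s => genU A a zs s z) t)
      (-(2 / ρ ^ 2) * (A + ∑ i, a i * dd zs ρ z i) + 2 * ∑ i, a i / dd zs ρ z i) ρ ∧
    -- mixed partial derivative: ∂/∂z of ∂U/∂ρ
    HasDerivAt (fun t => deriv (fun s => genU A a zs s t) ρ)
      ((2 / ρ) * ∑ i, a i * (z - zs i) / dd zs ρ z i) z ∧
    -- second partial derivative in z
    HasDerivAt (fun t => deriv (fun s => genU A a zs ρ s) t)
      (-2 * ∑ i, a i / dd zs ρ z i) z ∧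
    -- harmonicity: U_zz + U_ρρ + (1/ρ) U_ρ = 0
    deriv (fun t => deriv (fun s => genU A a zs ρ s) t) z +
      deriv (fun t => deriv (fun s => genU A a zs s z) t) ρ +
      (1 / ρ) * deriv (fun s => genU A a zs s z) ρ = 0 := by
  have Uρρ := hasDerivAt_deriv_genU_fst A a zs z hρ.ne'
  have Uzz := hasDerivAt_deriv_genU_snd A a zs z hρ.ne'
  refine ⟨Uρρ, hasDerivAt_deriv_genU_fst_snd A a zs z hρ.ne', Uzz, ?_⟩
  rw [Uzz.deriv, Uρρ.deriv, (hasDerivAt_genU_fst A a zs z hρ.ne').deriv]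
  field_simp
  ring

theorem statement1 {r : ℕ} (hr : 1 ≤ r) (A : ℝ) (hA : 0 < A)
    (zs a : Fin r → ℝ)
    (hz : ∀ i j : Fin r, i < j → zs i < zs j)
    (ha : ∀ i, 0 < a i) (hsum : ∑ i, a i = 1)
    (ρ z : ℝ) (hρ : 0 < ρ) :
    -- second partial derivative in ρ
    HasDerivAt (fun t => deriv (fun s => genU A a zs s z) t)
      (-(2 / ρ ^ 2) * (A + ∑ i, a i * dd zs ρ z i) + 2 * ∑ i, a i / dd zs ρ z i) ρ ∧
    -- mixed partial derivative: ∂/∂z of ∂U/∂ρ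
    HasDerivAt (fun t => deriv (fun s => genU A a zs s t) ρ)
      ((2 / ρ) * ∑ i, a i * (z - zs i) / dd zs ρ z i) z ∧
    -- second partial derivative in z
    HasDerivAt (fun t => deriv (fun s => genU A a zs ρ s) t)
      (-2 * ∑ i, a i / dd zs ρ z i) z ∧
    -- harmonicity: U_zz + U_ρρ + (1/ρ) U_ρ = 0
    deriv (fun t => deriv (fun s => genU A a zs ρ s) t) z +
      deriv (fun t => deriv (fun s => genU A a zs s z) t) ρ +
      (1 / ρ) * deriv (fun s => genU A a zs s z) ρ = 0 :=
  statement1_general A zs a ρ z hρ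
end

section
/- For every ρ > 0 and every z ∈ ℝ, the quantity e^{2ν}(ρ,z) := (1/A)·(A + Σ_{i=1}^r a_i·d_i)·( (Σ a_i/d_i)·(A + Σ a_i·d_i) − ( (Σ a_i·(z − z_i)/d_i)² + (Σ a_i·ρ/d_i)² ) ) is strictly positive. -/
open Finset

/-!
The vectors `((z − z_i)/d_i, ρ/d_i)` are unit vectors, so by convexity of the squared norm their
`a`-weighted mean `(X, Y)` satisfies `X² + Y² ≤ 1`. On the other hand Cauchy–Schwarz gives
`(∑ a_i/d_i)(∑ a_i d_i) ≥ (∑ a_i)² = 1`, and the extra term `A · ∑ a_i/d_i` is strictly positive.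
-/

section WeightedSums

variable {ι : Type*} (s : Finset ι) {w : ι → ℝ}

theorem sq_sum_mul_le_sum_mul_sq (hw : ∀ i ∈ s, 0 ≤ w i) (hw1 : ∑ i ∈ s, w i = 1)
    (f : ι → ℝ) : (∑ i ∈ s, w i * f i) ^ 2 ≤ ∑ i ∈ s, w i * f i ^ 2 := by
  have h := sum_sq_le_sum_mul_sum_of_sq_le_mul s (r := fun i => w i * f i) hw
    (fun i hi => mul_nonneg (hw i hi) (sq_nonneg (f i))) (fun i _ => (by ring : _ = _).le)
  rwa [hw1, one_mul] at h

theorem sq_sum_mul_add_sq_sum_mul_le_one (hw : ∀ i ∈ s, 0 ≤ w i) (hw1 : ∑ i ∈ s, w i = 1)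
    {f g : ι → ℝ} (hfg : ∀ i ∈ s, f i ^ 2 + g i ^ 2 = 1) :
    (∑ i ∈ s, w i * f i) ^ 2 + (∑ i ∈ s, w i * g i) ^ 2 ≤ 1 :=
  calc (∑ i ∈ s, w i * f i) ^ 2 + (∑ i ∈ s, w i * g i) ^ 2
      ≤ ∑ i ∈ s, w i * f i ^ 2 + ∑ i ∈ s, w i * g i ^ 2 :=
        add_le_add (sq_sum_mul_le_sum_mul_sq s hw hw1 f) (sq_sum_mul_le_sum_mul_sq s hw hw1 g)
    _ = ∑ i ∈ s, w i := by
        rw [← sum_add_distrib]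
        exact sum_congr rfl fun i hi => by rw [← mul_add, hfg i hi, mul_one]
    _ = 1 := hw1

theorem one_le_sum_div_mul_sum_mul (hw : ∀ i ∈ s, 0 ≤ w i) (hw1 : ∑ i ∈ s, w i = 1)
    {d : ι → ℝ} (hd : ∀ i ∈ s, 0 < d i) :
    1 ≤ (∑ i ∈ s, w i / d i) * ∑ i ∈ s, w i * d i := by
  have h := sum_sq_le_sum_mul_sum_of_sq_le_mul s (r := w)
    (fun i hi => div_nonneg (hw i hi) (hd i hi).le)
    (fun i hi => mul_nonneg (hw i hi) (hd i hi).le)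
    (fun i hi => (by field_simp [(hd i hi).ne'] : _ = _).le)
  rwa [hw1, one_pow] at h

end WeightedSums

theorem dd_pos {r : ℕ} (zs : Fin r → ℝ) {ρ : ℝ} (hρ : 0 < ρ) (z : ℝ) (i : Fin r) :
    0 < dd zs ρ z i :=
  Real.sqrt_pos.2 (by positivity)

theorem div_dd_sq_add_div_dd_sq {r : ℕ} (zs : Fin r → ℝ) {ρ : ℝ} (hρ : 0 < ρ) (z : ℝ)
    (i : Fin r) : ((z - zs i) / dd zs ρ z i) ^ 2 + (ρ / dd zs ρ z i) ^ 2 = 1 := by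
  have hd := dd_pos zs hρ z i
  rw [div_pow, div_pow, ← add_div, div_eq_one_iff_eq (by positivity), dd,
    Real.sq_sqrt (by positivity), add_comm]

theorem statement6_general {r : ℕ} (A : ℝ) (hA : 0 < A)
    (zs a : Fin r → ℝ)
    (ha : ∀ i, 0 < a i) (hsum : ∑ i, a i = 1)
    (ρ z : ℝ) (hρ : 0 < ρ) :
    0 < (1 / A) * (A + ∑ i, a i * dd zs ρ z i) *
      ((∑ i, a i / dd zs ρ z i) * (A + ∑ i, a i * dd zs ρ z i) -
        ((∑ i, a i * (z - zs i) / dd zs ρ z i) ^ 2 +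
          (∑ i, a i * ρ / dd zs ρ z i) ^ 2)) := by
  have ha' : ∀ i ∈ univ, 0 ≤ a i := fun i _ => (ha i).le
  have hd : ∀ i ∈ univ, 0 < dd zs ρ z i := fun i _ => dd_pos zs hρ z i
  have hXY :
      (∑ i, a i * (z - zs i) / dd zs ρ z i) ^ 2 + (∑ i, a i * ρ / dd zs ρ z i) ^ 2 ≤ 1 := by
    simp only [mul_div_assoc]
    exact sq_sum_mul_add_sq_sum_mul_le_one univ ha' hsum
      fun i _ => div_dd_sq_add_div_dd_sq zs hρ z i
  have hTS := one_le_sum_div_mul_sum_mul univ ha' hsum hd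
  have hS : 0 ≤ ∑ i, a i * dd zs ρ z i :=
    sum_nonneg fun i hi => mul_nonneg (ha' i hi) (hd i hi).le
  have hT : 0 < ∑ i, a i / dd zs ρ z i :=
    (sum_nonneg fun i hi => div_nonneg (ha' i hi) (hd i hi).le).lt_of_ne
      fun h => by rw [← h, zero_mul] at hTS; linarith
  have hfactor : 0 < (1 / A) * (A + ∑ i, a i * dd zs ρ z i) := by positivity
  refine mul_pos hfactor ?_
  nlinarith [mul_pos hT hA]

theorem statement6 {r : ℕ} (hr : 1 ≤ r) (A : ℝ) (hA : 0 < A)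
    (zs a : Fin r → ℝ)
    (hz : ∀ i j : Fin r, i < j → zs i < zs j)
    (ha : ∀ i, 0 < a i) (hsum : ∑ i, a i = 1)
    (ρ z : ℝ) (hρ : 0 < ρ) :
    0 < (1 / A) * (A + ∑ i, a i * dd zs ρ z i) *
      ((∑ i, a i / dd zs ρ z i) * (A + ∑ i, a i * dd zs ρ z i) -
        ((∑ i, a i * (z - zs i) / dd zs ρ z i) ^ 2 +
          (∑ i, a i * ρ / dd zs ρ z i) ^ 2)) :=
  statement6_general A hA zs a ha hsum ρ z hρ
end
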